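/- arXiv:1701.04238 — 3 statements merged into one kernel-verified Lean document; each statement's English description precedes it below -/
import Mathlib

section
/- The greedy algorithm for dominating set produces a dominating set D' with |D'| ≤ γ(G)·(1 + ln(Δ+1)), where γ(G) is the domination number and Δ is the maximum degree of G. -/
variable {V : Type*} [Fintype V] [DecidableEq V]

/-- The closed neighborhood of a vertex: the set of vertices it dominates. -/
def closedNbhd (G : SimpleGraph V) [DecidableRel G.Adj] (v : V) : Finset V :=
  insert v (G.neighborFinset v)

/-- The set of vertices dominated by a set `S` of chosen vertices. -/
def dominatedBy (G : SimpleGraph V) [DecidableRel G.Adj] (S : Finset V) : Finset V :=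
  S.biUnion (closedNbhd G)

/-- `U` is a dominating set of `G`. -/
def IsDominatingSet (G : SimpleGraph V) (U : Finset V) : Prop :=
  ∀ v : V, v ∈ U ∨ ∃ u ∈ U, G.Adj u v

/-- The domination number `γ(G)`. -/
noncomputable def dominationNumber (G : SimpleGraph V) : ℕ :=
  sInf {n | ∃ U : Finset V, U.card = n ∧ IsDominatingSet G U}

/-- `l` is a run of the greedy dominating-set algorithm: each selected vertex newly
dominates a maximal (and positive) number of currently undominated vertices, and at the
end every vertex is dominated. -/
def IsGreedyRun (G : SimpleGraph V) [DecidableRel G.Adj] (l : List V) : Prop :=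
  (∀ i : Fin l.length,
      (closedNbhd G (l.get i) \ dominatedBy G (l.take i).toFinset).Nonempty ∧
      ∀ v : V, (closedNbhd G v \ dominatedBy G (l.take i).toFinset).card ≤
        (closedNbhd G (l.get i) \ dominatedBy G (l.take i).toFinset).card) ∧
    dominatedBy G l.toFinset = Finset.univ

/-!
Chvátal's charging argument, for greedy set cover in general. When the greedy step picks a set
covering `k` new elements, each of them is charged `1 / k`, so the total charge is the number of
steps. Fix a set `T` of an optimal cover, and suppose `m` elements of `T` are still uncovered
before a step. Greedy maximality gives `k ≥ m`, so the elements of `T` covered in this step are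
charged at most `1/m` each, no more than the terms `1/m, 1/(m-1), …` of `H(m)` lost as `m`
drops. Telescoping, `T` receives total charge at most `H(|T|)`; for the closed neighbourhood of
a vertex `|T| ≤ Δ + 1`, and `H(n) ≤ 1 + ln n`.
-/

lemma harmonic_mono : Monotone harmonic :=
  monotone_nat_of_le_succ fun n => by
    rw [harmonic_succ]
    exact le_add_of_nonneg_right (by positivity)

lemma div_le_harmonic_add_sub {b k c : ℕ} (hc : b + k ≤ c) :
    (k : ℚ) / c ≤ harmonic (b + k) - harmonic b := by
  induction k with
  | zero => simp
  | succ k ih =>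
    have hpos : (0 : ℚ) < (b + k + 1 : ℕ) := by positivity
    have hstep : (1 : ℚ) / c ≤ (↑(b + k + 1))⁻¹ := by
      rw [one_div]; exact inv_anti₀ hpos (by exact_mod_cast hc)
    calc ((k + 1 : ℕ) : ℚ) / c = k / c + 1 / c := by push_cast; ring
      _ ≤ (harmonic (b + k) - harmonic b) + (↑(b + k + 1))⁻¹ := add_le_add (ih (by omega)) hstep
      _ = harmonic (b + (k + 1)) - harmonic b := by rw [← add_assoc, harmonic_succ]; ring

lemma Finset.card_sdiff_union_add_card_inter_sdiff {α : Type*} [DecidableEq α]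
    (T D C : Finset α) :
    (T \ (D ∪ C)).card + ((C \ D) ∩ T).card = (T \ D).card := by
  rw [← Finset.card_sdiff_add_card_inter (T \ D) C, sdiff_sdiff_left]
  congr 2
  ext; simp only [Finset.mem_inter, Finset.mem_sdiff]; tauto

section GreedyCover

variable {α β : Type*} [DecidableEq α] [DecidableEq β] (S : β → Finset α)

def prefixCover (l : List β) (i : ℕ) : Finset α := (l.take i).toFinset.biUnion S

def newlyCovered (l : List β) (i : Fin l.length) : Finset α := S (l.get i) \ prefixCover S l i

def IsGreedyCover (l : List β) : Prop :=
  ∀ i : Fin l.length, (newlyCovered S l i).Nonempty ∧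
    ∀ b, (S b \ prefixCover S l i).card ≤ (newlyCovered S l i).card

variable {S}

@[simp]
lemma prefixCover_zero (l : List β) : prefixCover S l 0 = ∅ := by simp [prefixCover]

lemma prefixCover_succ (l : List β) (i : Fin l.length) :
    prefixCover S l (i + 1) = prefixCover S l i ∪ S (l.get i) := by
  rw [prefixCover, prefixCover, ← List.take_concat_get i.isLt, List.concat_eq_append,
    List.toFinset_append, Finset.union_biUnion]
  simp

lemma charge_le_harmonic_sub {T D C : Finset α} (hmax : (T \ D).card ≤ (C \ D).card) :
    (((C \ D) ∩ T).card : ℚ) / (C \ D).card ≤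
      harmonic (T \ D).card - harmonic (T \ (D ∪ C)).card := by
  have hsplit := Finset.card_sdiff_union_add_card_inter_sdiff T D C
  rw [← hsplit]
  exact div_le_harmonic_add_sub (by omega)

lemma IsGreedyCover.sum_charge_le_harmonic {l : List β} (hl : IsGreedyCover S l) (w : β) :
    ∑ i : Fin l.length, ((newlyCovered S l i ∩ S w).card : ℚ) / (newlyCovered S l i).card ≤
      harmonic (S w).card := by
  set h : ℕ → ℚ := fun i => harmonic (S w \ prefixCover S l i).card
  calc ∑ i : Fin l.length, ((newlyCovered S l i ∩ S w).card : ℚ) / (newlyCovered S l i).card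
      ≤ ∑ i : Fin l.length, (h i - h (i + 1)) := by
        refine Finset.sum_le_sum fun i _ => ?_
        simp only [h, prefixCover_succ]
        exact charge_le_harmonic_sub ((hl i).2 w)
    _ = h 0 - h l.length := by
        rw [Fin.sum_univ_eq_sum_range (fun i => h i - h (i + 1)), Finset.sum_range_sub']
    _ ≤ harmonic (S w).card := by
        have : 0 ≤ h l.length := harmonic_zero ▸ harmonic_mono (Nat.zero_le _)
        simp only [h, prefixCover_zero, Finset.sdiff_empty]
        linarith

theorem IsGreedyCover.length_le_sum_harmonic {l : List β} (hl : IsGreedyCover S l)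
    {U : Finset β} (hU : l.toFinset.biUnion S ⊆ U.biUnion S) :
    (l.length : ℚ) ≤ ∑ w ∈ U, harmonic (S w).card := by
  have hcharge (i : Fin l.length) :
      1 ≤ ∑ w ∈ U, ((newlyCovered S l i ∩ S w).card : ℚ) / (newlyCovered S l i).card := by
    have hsub : newlyCovered S l i ⊆ U.biUnion fun w => newlyCovered S l i ∩ S w := by
      intro x hx
      have : x ∈ U.biUnion S :=
        hU (Finset.mem_biUnion.2 ⟨l.get i, by simp, (Finset.mem_sdiff.1 hx).1⟩)
      simpa [hx] using this
    have hpos : (0 : ℚ) < (newlyCovered S l i).card := by exact_mod_cast (hl i).1.card_pos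
    rw [← Finset.sum_div, one_le_div hpos]
    exact_mod_cast (Finset.card_le_card hsub).trans Finset.card_biUnion_le
  calc (l.length : ℚ) = ∑ _i : Fin l.length, 1 := by simp
    _ ≤ ∑ i : Fin l.length, ∑ w ∈ U,
          ((newlyCovered S l i ∩ S w).card : ℚ) / (newlyCovered S l i).card :=
        Finset.sum_le_sum fun i _ => hcharge i
    _ ≤ ∑ w ∈ U, harmonic (S w).card := by
        rw [Finset.sum_comm]
        exact Finset.sum_le_sum fun w _ => hl.sum_charge_le_harmonic w

end GreedyCover

section Domination

variable (G : SimpleGraph V) [DecidableRel G.Adj]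

lemma card_closedNbhd (v : V) : (closedNbhd G v).card = G.degree v + 1 := by
  rw [closedNbhd, Finset.card_insert_of_notMem (by simp),
    SimpleGraph.card_neighborFinset_eq_degree]

lemma isDominatingSet_iff_dominatedBy_eq_univ (U : Finset V) :
    IsDominatingSet G U ↔ dominatedBy G U = Finset.univ := by
  simp only [IsDominatingSet, Finset.eq_univ_iff_forall, dominatedBy, closedNbhd,
    Finset.mem_biUnion, Finset.mem_insert, SimpleGraph.mem_neighborFinset]
  refine forall_congr' fun v => ⟨?_, ?_⟩
  · rintro (hv | ⟨u, hu, huv⟩)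
    exacts [⟨v, hv, .inl rfl⟩, ⟨u, hu, .inr huv⟩]
  · rintro ⟨u, hu, rfl | huv⟩
    exacts [.inl hu, .inr ⟨u, hu, huv⟩]

end Domination

theorem greedy_dominating_set_bound_general (G : SimpleGraph V) [DecidableRel G.Adj]
    (l : List V) (hl : IsGreedyRun G l) :
    IsDominatingSet G l.toFinset ∧
      (l.length : ℝ) ≤
        (dominationNumber G : ℝ) * (1 + Real.log ((G.maxDegree : ℝ) + 1)) := by
  obtain ⟨hgreedy, hcover⟩ := hl
  refine ⟨(isDominatingSet_iff_dominatedBy_eq_univ G _).2 hcover, ?_⟩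
  obtain ⟨U, hUcard, hU⟩ : ∃ U : Finset V, U.card = dominationNumber G ∧ IsDominatingSet G U :=
    Nat.sInf_mem (s := {n | ∃ U : Finset V, U.card = n ∧ IsDominatingSet G U})
      ⟨_, Finset.univ, rfl, fun v => .inl (Finset.mem_univ v)⟩
  have hUcover : U.biUnion (closedNbhd G) = Finset.univ :=
    (isDominatingSet_iff_dominatedBy_eq_univ G U).1 hU
  -- `hgreedy` is, by unfolding, `IsGreedyCover (closedNbhd G) l`.
  have hlen : (l.length : ℚ) ≤ ∑ w ∈ U, harmonic (closedNbhd G w).card :=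
    IsGreedyCover.length_le_sum_harmonic hgreedy (hUcover ▸ Finset.subset_univ _)
  have hdeg (w : V) : harmonic (closedNbhd G w).card ≤ harmonic (G.maxDegree + 1) :=
    harmonic_mono <| (card_closedNbhd G w).trans_le <|
      Nat.add_le_add_right (G.degree_le_maxDegree w) 1
  have hsum : (l.length : ℚ) ≤ U.card * harmonic (G.maxDegree + 1) :=
    hlen.trans <| by
      simpa only [nsmul_eq_mul] using Finset.sum_le_card_nsmul U _ _ fun w _ => hdeg w
  calc (l.length : ℝ) ≤ (U.card * harmonic (G.maxDegree + 1) : ℚ) := by exact_mod_cast hsum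
    _ ≤ (dominationNumber G : ℝ) * (1 + Real.log ((G.maxDegree : ℝ) + 1)) := by
      rw [← hUcard]
      push_cast
      gcongr
      exact_mod_cast harmonic_le_one_add_log (G.maxDegree + 1)

/-- The greedy algorithm produces a dominating set `D'` with
`|D'| ≤ γ(G) · (1 + ln(Δ+1))`, where `Δ` is the maximum degree. -/
theorem greedy_dominating_set_bound (G : SimpleGraph V) [DecidableRel G.Adj]
    (hΔ : 1 ≤ G.maxDegree) (l : List V) (hl : IsGreedyRun G l) :
    IsDominatingSet G l.toFinset ∧
      (l.length : ℝ) ≤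
        (dominationNumber G : ℝ) * (1 + Real.log ((G.maxDegree : ℝ) + 1)) :=
  greedy_dominating_set_bound_general G l hl
end

section
/- Let A* and A_t be random variables taking values in a finite arm set of size K, where A_t has the same distribution as A*. Suppose the observation upon playing arm a reveals a quantity depending only on the equivalence class of a under an equivalence relation ≡ with m classes. Then the information ratio Γ_t = (E[R(Y_{A*}) − R(Y_{A_t})])² / I(A*; (A_t, Y_{A_t})) satisfies Γ_t ≤ m/2, provided rewards take values in [0,1]. -/
/-!
Because `A_t` is independent of `(A*, Z)` and has the law of `A*`, the expected regret splits as
`∑ a, (E[1{A* = a} R(a, Z_[a])] - P(A* = a) E[R(a, Z_[a])])` and the information gain as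
`∑ a, P(A* = a) I(A*; Z_[a])`. The `a`-th regret term is `P(A* = a)` times the difference of the
means of `R(a, ·) ∈ [0, 1]` under the law of `Z_[a]` given `A* = a` and under the law of `Z_[a]`,
so Pinsker's inequality bounds its square by `P(A* = a) / 2` times the part of `I(A*; Z_[a])`
carried by the event `A* = a`. Summing these parts over the arms of one class gives at most
`I(A*; Z_[a])`, so Cauchy–Schwarz over the arms loses only a factor `m`.

Pinsker's inequality is derived from Kullback's bound `3 (t - 1)² / (2 (t + 2)) ≤ t log t - t + 1`
and Cauchy–Schwarz.
-/

open scoped Classical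

noncomputable section

variable {Ω : Type*} [Fintype Ω]

/-- Probability that the random variable `X` takes the value `a`, under the pmf `p`
on the finite sample space `Ω`. -/
def probEq {α : Type*} (p : Ω → ℝ) (X : Ω → α) (a : α) : ℝ :=
  ∑ ω, if X ω = a then p ω else 0

/-- Expectation of `f` under the pmf `p`. -/
def pmfExp (p : Ω → ℝ) (f : Ω → ℝ) : ℝ := ∑ ω, p ω * f ω

/-- Shannon entropy (in nats) of the distribution of `X` under `p`. -/
def entropyOf {α : Type*} (p : Ω → ℝ) (X : Ω → α) : ℝ :=
  -∑ ω, p ω * Real.log (probEq p X (X ω))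

/-- Mutual information `I(X;Y)` under the pmf `p`. -/
def mutualInfo {α β : Type*} (p : Ω → ℝ) (X : Ω → α) (Y : Ω → β) : ℝ :=
  ∑ ω, p ω * Real.log (probEq p (fun ω' => (X ω', Y ω')) (X ω, Y ω) /
    (probEq p X (X ω) * probEq p Y (Y ω)))

/-- The pmf `p` conditioned on the event `W = c`. -/
def condOn {γ : Type*} (p : Ω → ℝ) (W : Ω → γ) (c : γ) : Ω → ℝ :=
  fun ω => (if W ω = c then p ω else 0) / probEq p W c

/-- Conditional mutual information `I(X;Y ∣ W)` under the pmf `p`. -/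
def condMutualInfo {α β γ : Type*} (p : Ω → ℝ) (X : Ω → α) (Y : Ω → β) (W : Ω → γ) : ℝ :=
  ∑ ω, p ω * Real.log
    ((probEq p (fun ω' => (X ω', Y ω', W ω')) (X ω, Y ω, W ω) * probEq p W (W ω)) /
      (probEq p (fun ω' => (X ω', W ω')) (X ω, W ω) *
        probEq p (fun ω' => (Y ω', W ω')) (Y ω, W ω)))

/-- The history after `t` rounds of the observation process `O`. -/
def history {T : ℕ} {𝒪 : Type*} (O : Fin T → Ω → 𝒪) (t : Fin T) (ω : Ω) :
    Fin T → Option 𝒪 :=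
  fun s => if (s : ℕ) < (t : ℕ) then some (O s ω) else none

open Real Finset InformationTheory

theorem three_mul_sq_sub_one_div_le_klFun {t : ℝ} (ht : 0 ≤ t) :
    3 * (t - 1) ^ 2 / (2 * (t + 2)) ≤ klFun t := by
  set G : ℝ → ℝ := fun t => klFun t - 3 * (t - 1) ^ 2 / (2 * (t + 2))
  set G' : ℝ → ℝ := fun t => log t - 3 / 2 + 27 / (2 * (t + 2) ^ 2)
  have hG : ∀ t : ℝ, 0 < t → HasDerivAt G (G' t) t := fun t ht => by
    have hq : HasDerivAt (fun t : ℝ => 3 * (t - 1) ^ 2 / (2 * (t + 2)))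
        ((3 * (2 * (t - 1)) * (2 * (t + 2)) - 3 * (t - 1) ^ 2 * 2) / (2 * (t + 2)) ^ 2) t := by
      refine HasDerivAt.div ?_ ?_ (by positivity)
      · simpa using (((hasDerivAt_id t).sub_const 1).pow 2).const_mul (3 : ℝ)
      · simpa using ((hasDerivAt_id t).add_const 2).const_mul (2 : ℝ)
    refine ((hasDerivAt_klFun ht.ne').sub hq).congr_deriv ?_
    simp only [G']
    field_simp
    ring
  have hG' : ∀ t : ℝ, 0 < t → HasDerivAt G' (1 / t - 27 / (t + 2) ^ 3) t := fun t ht => by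
    have h2 : HasDerivAt (fun t : ℝ => 2 * (t + 2) ^ 2) (2 * (2 * (t + 2))) t := by
      simpa using (((hasDerivAt_id t).add_const 2).pow 2).const_mul (2 : ℝ)
    refine (((hasDerivAt_log ht.ne').sub_const (3 / 2)).add
      ((hasDerivAt_const t (27 : ℝ)).div h2 (by positivity))).congr_deriv ?_
    field_simp
    ring
  have hconv : ConvexOn ℝ (Set.Ici 0) G := by
    refine convexOn_of_hasDerivWithinAt2_nonneg (convex_Ici 0) ?_ ?_ ?_ ?_ (f' := G')
      (f'' := fun t => 1 / t - 27 / (t + 2) ^ 3)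
    · refine continuous_klFun.continuousOn.sub (ContinuousOn.div (by fun_prop) (by fun_prop) ?_)
      intro t ht
      simp only [Set.mem_Ici] at ht
      positivity
    · rw [interior_Ici]
      exact fun t ht => (hG t ht).hasDerivWithinAt
    · rw [interior_Ici]
      exact fun t ht => (hG' t ht).hasDerivWithinAt
    · rw [interior_Ici]
      intro t (ht : 0 < t)
      -- `(t + 2)³ - 27 t = (t - 1)² (t + 8)`
      rw [div_sub_div _ _ ht.ne' (by positivity)]
      exact div_nonneg (by nlinarith [sq_nonneg (t - 1)]) (by positivity)
  have hmin : IsMinOn G (Set.Ici 0) 1 := by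
    refine hconv.isMinOn_of_rightDeriv_eq_zero (by simp) ?_
    rw [(hG 1 one_pos).hasDerivWithinAt.derivWithin (uniqueDiffWithinAt_Ioi 1)]
    norm_num [G']
  have := hmin (Set.mem_Ici.2 ht)
  norm_num [G, klFun_one] at this
  linarith

theorem three_mul_sq_sub_div_le_mul_log_div {u v : ℝ} (hu : 0 ≤ u) (hv : 0 ≤ v)
    (huv : v = 0 → u = 0) :
    3 * (u - v) ^ 2 / (2 * (u + 2 * v)) ≤ u * log (u / v) - u + v := by
  rcases hv.eq_or_lt with rfl | hv
  · simp [huv rfl]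
  have key := mul_le_mul_of_nonneg_left
    (three_mul_sq_sub_one_div_le_klFun (div_nonneg hu hv.le)) hv.le
  rw [klFun_apply] at key
  calc 3 * (u - v) ^ 2 / (2 * (u + 2 * v))
      = v * (3 * (u / v - 1) ^ 2 / (2 * (u / v + 2))) := by field_simp
    _ ≤ v * (u / v * log (u / v) + 1 - u / v) := key
    _ = u * log (u / v) - u + v := by field_simp; ring

section Divergence

variable {β : Type*} {s : Finset β} {u v : β → ℝ}

theorem sum_three_mul_sq_sub_div_le_sum_mul_log_div (hu : ∀ w ∈ s, 0 ≤ u w)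
    (hv : ∀ w ∈ s, 0 ≤ v w) (huv : ∀ w ∈ s, v w = 0 → u w = 0)
    (hsum : ∑ w ∈ s, u w = ∑ w ∈ s, v w) :
    ∑ w ∈ s, 3 * (u w - v w) ^ 2 / (2 * (u w + 2 * v w)) ≤
      ∑ w ∈ s, u w * log (u w / v w) := by
  calc ∑ w ∈ s, 3 * (u w - v w) ^ 2 / (2 * (u w + 2 * v w))
      ≤ ∑ w ∈ s, (u w * log (u w / v w) - u w + v w) := sum_le_sum fun w hw =>
        three_mul_sq_sub_div_le_mul_log_div (hu w hw) (hv w hw) (huv w hw)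
    _ = ∑ w ∈ s, u w * log (u w / v w) := by
        rw [sum_add_distrib, sum_sub_distrib, hsum, sub_add_cancel]

theorem sum_mul_log_div_nonneg (hu : ∀ w ∈ s, 0 ≤ u w) (hv : ∀ w ∈ s, 0 ≤ v w)
    (huv : ∀ w ∈ s, v w = 0 → u w = 0) (hsum : ∑ w ∈ s, u w = ∑ w ∈ s, v w) :
    0 ≤ ∑ w ∈ s, u w * log (u w / v w) :=
  (sum_nonneg fun w hw => by have := hu w hw; have := hv w hw; positivity).trans
    (sum_three_mul_sq_sub_div_le_sum_mul_log_div hu hv huv hsum)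

theorem sq_sum_abs_sub_le (hu : ∀ w ∈ s, 0 ≤ u w) (hv : ∀ w ∈ s, 0 ≤ v w)
    (huv : ∀ w ∈ s, v w = 0 → u w = 0) (hsum : ∑ w ∈ s, u w = ∑ w ∈ s, v w) :
    (∑ w ∈ s, |u w - v w|) ^ 2 ≤ 2 * (∑ w ∈ s, u w) * ∑ w ∈ s, u w * log (u w / v w) := by
  have hpos : ∀ w ∈ s, 0 ≤ u w + 2 * v w := fun w hw => by linarith [hu w hw, hv w hw]
  have hCS : ∀ w ∈ s, |u w - v w| ^ 2 ≤
      2 * (u w + 2 * v w) / 3 * (3 * (u w - v w) ^ 2 / (2 * (u w + 2 * v w))) := by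
    intro w hw
    rcases (hpos w hw).eq_or_lt with h | h
    · obtain ⟨hu0, hv0⟩ : u w = 0 ∧ v w = 0 := by constructor <;> linarith [hu w hw, hv w hw]
      simp [hu0, hv0]
    · rw [sq_abs]
      apply le_of_eq
      field_simp
      rw [mul_div_cancel_right₀ _ (by linarith : 0 < u w + v w * 2).ne']
  calc (∑ w ∈ s, |u w - v w|) ^ 2
      ≤ (∑ w ∈ s, 2 * (u w + 2 * v w) / 3) *
          ∑ w ∈ s, 3 * (u w - v w) ^ 2 / (2 * (u w + 2 * v w)) :=
        sum_sq_le_sum_mul_sum_of_sq_le_mul s (fun w hw => by have := hpos w hw; positivity)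
          (fun w hw => by have := hpos w hw; positivity) hCS
    _ ≤ (∑ w ∈ s, 2 * (u w + 2 * v w) / 3) * ∑ w ∈ s, u w * log (u w / v w) :=
        mul_le_mul_of_nonneg_left (sum_three_mul_sq_sub_div_le_sum_mul_log_div hu hv huv hsum)
          (sum_nonneg fun w hw => by have := hpos w hw; positivity)
    _ = 2 * (∑ w ∈ s, u w) * ∑ w ∈ s, u w * log (u w / v w) := by
        simp only [← sum_div, mul_add, sum_add_distrib, ← mul_sum, ← hsum]
        ring

theorem abs_sum_sub_mul_le (hsum : ∑ w ∈ s, u w = ∑ w ∈ s, v w) {f : β → ℝ}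
    (hf : ∀ w ∈ s, f w ∈ Set.Icc 0 1) :
    |∑ w ∈ s, (u w - v w) * f w| ≤ (∑ w ∈ s, |u w - v w|) / 2 := by
  -- the total mass of `u - v` vanishes, so `f` may be recentred at `1/2`
  have hcentre : ∑ w ∈ s, (u w - v w) * f w = ∑ w ∈ s, (u w - v w) * (f w - 1 / 2) := by
    simp only [mul_sub, sum_sub_distrib, ← sum_mul, hsum, sub_self, zero_mul, sub_zero]
  rw [hcentre, sum_div]
  refine (abs_sum_le_sum_abs _ _).trans (sum_le_sum fun w hw => ?_)
  have hf' : |f w - 1 / 2| ≤ 1 / 2 := abs_le.2 ⟨by linarith [(hf w hw).1], by linarith [(hf w hw).2]⟩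
  rw [abs_mul]
  nlinarith [abs_nonneg (u w - v w)]

theorem sq_sum_sub_mul_le (hu : ∀ w ∈ s, 0 ≤ u w) (hv : ∀ w ∈ s, 0 ≤ v w)
    (huv : ∀ w ∈ s, v w = 0 → u w = 0) (hsum : ∑ w ∈ s, u w = ∑ w ∈ s, v w) {f : β → ℝ}
    (hf : ∀ w ∈ s, f w ∈ Set.Icc 0 1) :
    (∑ w ∈ s, (u w - v w) * f w) ^ 2 ≤
      (∑ w ∈ s, u w) / 2 * ∑ w ∈ s, u w * log (u w / v w) := by
  have hTV := sq_sum_abs_sub_le hu hv huv hsum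
  calc (∑ w ∈ s, (u w - v w) * f w) ^ 2 ≤ ((∑ w ∈ s, |u w - v w|) / 2) ^ 2 :=
        sq_le_sq.2 ((abs_sum_sub_mul_le hsum hf).trans (le_abs_self _))
    _ ≤ (∑ w ∈ s, u w) / 2 * ∑ w ∈ s, u w * log (u w / v w) := by linarith

end Divergence

section FiniteLaws

variable {α β γ τ ν : Type*} (p : Ω → ℝ)

theorem probEq_nonneg (hp : ∀ ω, 0 ≤ p ω) (X : Ω → α) (a : α) : 0 ≤ probEq p X a :=
  sum_nonneg fun ω _ => ite_nonneg (hp ω) le_rfl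

theorem probEq_comp_of_injective {g : α → β} (hg : Function.Injective g) (X : Ω → α) (a : α) :
    probEq p (fun ω => g (X ω)) (g a) = probEq p X a := by
  simp only [probEq, hg.eq_iff]

theorem sum_mul_comp_eq_sum_probEq (Y : Ω → β) (s : Finset β) (hs : ∀ ω, Y ω ∈ s)
    (g : β → ℝ) : ∑ ω, p ω * g (Y ω) = ∑ y ∈ s, probEq p Y y * g y := by
  simp only [probEq, sum_mul, ite_mul, zero_mul]
  rw [sum_comm]
  simp [hs]

theorem sum_probEq (Y : Ω → β) (s : Finset β) (hs : ∀ ω, Y ω ∈ s) :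
    ∑ y ∈ s, probEq p Y y = ∑ ω, p ω := by
  simpa using (sum_mul_comp_eq_sum_probEq p Y s hs fun _ => 1).symm

theorem sum_mul_eq_sum_sum_ite [Fintype α] (X : Ω → α) (g : α → Ω → ℝ) :
    ∑ ω, p ω * g (X ω) ω = ∑ a, ∑ ω, (if X ω = a then p ω else 0) * g a ω := by
  rw [sum_comm]
  simp [ite_mul]

theorem probEq_ite_eq (X : Ω → α) (Y : Ω → β) (x : α) (y : β) :
    probEq (fun ω => if X ω = x then p ω else 0) Y y = probEq p (fun ω => (X ω, Y ω)) (x, y) := by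
  unfold probEq
  refine sum_congr rfl fun ω _ => ?_
  by_cases hX : X ω = x <;> by_cases hY : Y ω = y <;> simp [hX, hY]

theorem sum_probEq_prodMk (X : Ω → α) (Y : Ω → β) (x : α) (s : Finset β) (hs : ∀ ω, Y ω ∈ s) :
    ∑ y ∈ s, probEq p (fun ω => (X ω, Y ω)) (x, y) = probEq p X x := by
  simp only [← probEq_ite_eq]
  exact sum_probEq _ Y s hs

theorem probEq_prodMk_le_left (hp : ∀ ω, 0 ≤ p ω) (X : Ω → α) (Y : Ω → β) (x : α) (y : β) :
    probEq p (fun ω => (X ω, Y ω)) (x, y) ≤ probEq p X x :=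
  sum_le_sum fun ω _ => by
    by_cases hX : X ω = x <;> by_cases hY : Y ω = y <;> simp [hX, hY, hp ω]

theorem probEq_prodMk_le_right (hp : ∀ ω, 0 ≤ p ω) (X : Ω → α) (Y : Ω → β) (x : α) (y : β) :
    probEq p (fun ω => (X ω, Y ω)) (x, y) ≤ probEq p Y y :=
  sum_le_sum fun ω _ => by
    by_cases hX : X ω = x <;> by_cases hY : Y ω = y <;> simp [hX, hY, hp ω]

theorem probEq_prodMk_eq_zero_of_mul_eq_zero (hp : ∀ ω, 0 ≤ p ω) (X : Ω → α) (Y : Ω → β)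
    {x : α} {y : β} (h : probEq p X x * probEq p Y y = 0) :
    probEq p (fun ω => (X ω, Y ω)) (x, y) = 0 := by
  refine le_antisymm ?_ (probEq_nonneg p hp _ _)
  rcases mul_eq_zero.1 h with h | h
  · exact h ▸ probEq_prodMk_le_left p hp X Y x y
  · exact h ▸ probEq_prodMk_le_right p hp X Y x y

theorem sum_probEq_prodMk_eq_sum_mul (hpsum : ∑ ω, p ω = 1) (X : Ω → α) (Y : Ω → β) (x : α)
    (s : Finset β) (hs : ∀ ω, Y ω ∈ s) :
    ∑ y ∈ s, probEq p (fun ω => (X ω, Y ω)) (x, y) = ∑ y ∈ s, probEq p X x * probEq p Y y := by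
  rw [sum_probEq_prodMk p X Y x s hs, ← mul_sum, sum_probEq p Y s hs, hpsum, mul_one]

section Independence

variable [Fintype τ] (T : Ω → τ) (V : Ω → ν)

theorem sum_mul_eq_sum_probEq_mul_of_indep
    (hind : ∀ t v, probEq p (fun ω => (T ω, V ω)) (t, v) = probEq p T t * probEq p V v)
    (g : τ → ν → ℝ) :
    ∑ ω, p ω * g (T ω) (V ω) = ∑ t, probEq p T t * ∑ ω, p ω * g t (V ω) := by
  have hV : ∀ ω, V ω ∈ univ.image V := fun ω => mem_image_of_mem V (mem_univ ω)
  calc ∑ ω, p ω * g (T ω) (V ω)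
      = ∑ tv ∈ univ ×ˢ univ.image V, probEq p (fun ω => (T ω, V ω)) tv * g tv.1 tv.2 :=
        sum_mul_comp_eq_sum_probEq p (fun ω => (T ω, V ω)) _
          (fun ω => mem_product.2 ⟨mem_univ _, hV ω⟩)
          fun tv => g tv.1 tv.2
    _ = ∑ t, probEq p T t * ∑ v ∈ univ.image V, probEq p V v * g t v := by
        rw [sum_product]
        simp only [hind, mul_sum, mul_assoc]
    _ = ∑ t, probEq p T t * ∑ ω, p ω * g t (V ω) := by
        simp only [sum_mul_comp_eq_sum_probEq p V _ hV]

theorem probEq_prodMk_of_indep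
    (hind : ∀ t v, probEq p (fun ω => (T ω, V ω)) (t, v) = probEq p T t * probEq p V v)
    (k : τ → ν → γ) (t : τ) (c : γ) :
    probEq p (fun ω => (T ω, k (T ω) (V ω))) (t, c) =
      probEq p T t * probEq p (fun ω => k t (V ω)) c := by
  have h := sum_mul_eq_sum_probEq_mul_of_indep p T V hind
    fun t' v => if (t', k t' v) = (t, c) then 1 else 0
  rw [sum_eq_single t (fun t' _ ht' => by simp [ht'])
    (fun h => absurd (mem_univ t) h)] at h
  simpa [probEq] using h

end Independence

end FiniteLaws

section MutualInfo

variable {α β γ τ ν : Type*} (p : Ω → ℝ)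

/-- The part of `mutualInfo p X Y` carried by the event `X = x`: `P(X = x)` times the
divergence of the law of `Y` given `X = x` from the law of `Y`. -/
def mutualInfoAt (X : Ω → α) (Y : Ω → β) (x : α) : ℝ :=
  ∑ ω, (if X ω = x then p ω else 0) *
    log (probEq p (fun ω => (X ω, Y ω)) (x, Y ω) / (probEq p X x * probEq p Y (Y ω)))

theorem sum_mutualInfoAt [Fintype α] (X : Ω → α) (Y : Ω → β) :
    ∑ x, mutualInfoAt p X Y x = mutualInfo p X Y :=
  (sum_mul_eq_sum_sum_ite p X _).symm

theorem mutualInfoAt_eq_sum (X : Ω → α) (Y : Ω → β) (x : α) (s : Finset β)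
    (hs : ∀ ω, Y ω ∈ s) :
    mutualInfoAt p X Y x = ∑ y ∈ s, probEq p (fun ω => (X ω, Y ω)) (x, y) *
      log (probEq p (fun ω => (X ω, Y ω)) (x, y) / (probEq p X x * probEq p Y y)) := by
  simp only [mutualInfoAt, sum_mul_comp_eq_sum_probEq _ Y s hs
    fun y => log (probEq p (fun ω => (X ω, Y ω)) (x, y) / (probEq p X x * probEq p Y y)),
    probEq_ite_eq]

theorem mutualInfoAt_nonneg (hp : ∀ ω, 0 ≤ p ω) (hpsum : ∑ ω, p ω = 1) (X : Ω → α)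
    (Y : Ω → β) (x : α) : 0 ≤ mutualInfoAt p X Y x := by
  have hY : ∀ ω, Y ω ∈ univ.image Y := fun ω => mem_image_of_mem Y (mem_univ ω)
  rw [mutualInfoAt_eq_sum p X Y x _ hY]
  exact sum_mul_log_div_nonneg (fun _ _ => probEq_nonneg p hp _ _)
    (fun _ _ => mul_nonneg (probEq_nonneg p hp _ _) (probEq_nonneg p hp _ _))
    (fun _ _ => probEq_prodMk_eq_zero_of_mul_eq_zero p hp X Y)
    (sum_probEq_prodMk_eq_sum_mul p hpsum X Y x _ hY)

theorem mutualInfo_nonneg [Fintype α] (hp : ∀ ω, 0 ≤ p ω) (hpsum : ∑ ω, p ω = 1)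
    (X : Ω → α) (Y : Ω → β) : 0 ≤ mutualInfo p X Y :=
  sum_mutualInfoAt p X Y ▸ sum_nonneg fun x _ => mutualInfoAt_nonneg p hp hpsum X Y x

/-- Pinsker's inequality for the law of `Y` given `X = x` against the law of `Y`, scaled by
`P(X = x)²`. -/
theorem sq_sub_le_mutualInfoAt (hp : ∀ ω, 0 ≤ p ω) (hpsum : ∑ ω, p ω = 1) (X : Ω → α)
    (Y : Ω → β) (x : α) {f : β → ℝ} (hf : ∀ y, f y ∈ Set.Icc 0 1) :
    (∑ ω, (if X ω = x then p ω else 0) * f (Y ω) - probEq p X x * ∑ ω, p ω * f (Y ω)) ^ 2 ≤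
      probEq p X x / 2 * mutualInfoAt p X Y x := by
  have hY : ∀ ω, Y ω ∈ univ.image Y := fun ω => mem_image_of_mem Y (mem_univ ω)
  have hdiff : ∑ ω, (if X ω = x then p ω else 0) * f (Y ω) - probEq p X x * ∑ ω, p ω * f (Y ω) =
      ∑ y ∈ univ.image Y, (probEq p (fun ω => (X ω, Y ω)) (x, y) -
        probEq p X x * probEq p Y y) * f y := by
    simp only [sum_mul_comp_eq_sum_probEq _ Y _ hY f, probEq_ite_eq, mul_sum, sub_mul,
      sum_sub_distrib, mul_assoc]
  have h := sq_sum_sub_mul_le (fun _ _ => probEq_nonneg p hp _ _)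
    (fun _ _ => mul_nonneg (probEq_nonneg p hp _ _) (probEq_nonneg p hp _ _))
    (fun _ _ => probEq_prodMk_eq_zero_of_mul_eq_zero p hp X Y)
    (sum_probEq_prodMk_eq_sum_mul p hpsum X Y x _ hY) fun y _ => hf y
  rwa [sum_probEq_prodMk p X Y x _ hY, ← mutualInfoAt_eq_sum p X Y x _ hY, ← hdiff] at h

theorem mutualInfo_comp_right_of_injective (X : Ω → α) (Y : Ω → β) {g : β → γ}
    (hg : Function.Injective g) : mutualInfo p X (fun ω => g (Y ω)) = mutualInfo p X Y := by
  simp only [mutualInfo, probEq, Prod.mk.injEq, hg.eq_iff]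

theorem mutualInfo_prodMk_of_indep [Fintype τ] (T : Ω → τ) (V : Ω → ν)
    (hind : ∀ t v, probEq p (fun ω => (T ω, V ω)) (t, v) = probEq p T t * probEq p V v)
    (f : ν → α) (h : τ → ν → β) :
    mutualInfo p (fun ω => f (V ω)) (fun ω => (T ω, h (T ω) (V ω))) =
      ∑ t, probEq p T t * mutualInfo p (fun ω => f (V ω)) (fun ω => h t (V ω)) := by
  have hjoint : ∀ x t y, probEq p (fun ω => (f (V ω), T ω, h (T ω) (V ω))) (x, t, y) =
      probEq p T t * probEq p (fun ω => (f (V ω), h t (V ω))) (x, y) := by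
    intro x t y
    have hswap : Function.Injective fun xty : α × τ × β => (xty.2.1, xty.1, xty.2.2) :=
      fun _ _ h => by simp_all [Prod.ext_iff]
    rw [← probEq_comp_of_injective p hswap]
    exact probEq_prodMk_of_indep p T V hind (fun t v => (f v, h t v)) t (x, y)
  unfold mutualInfo
  simp only [hjoint, probEq_prodMk_of_indep p T V hind h]
  refine (sum_mul_eq_sum_probEq_mul_of_indep p T V hind fun t v =>
    log (probEq p T t * probEq p (fun ω => (f (V ω), h t (V ω))) (f v, h t v) /
      (probEq p (fun ω => f (V ω)) (f v) * (probEq p T t * probEq p (fun ω => h t (V ω)) (h t v)))))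
    |>.trans (sum_congr rfl fun t _ => ?_)
  rcases eq_or_ne (probEq p T t) 0 with ht | ht
  · simp [ht]
  · simp only [mul_left_comm (probEq p (fun ω => f (V ω)) _) (probEq p T t),
      mul_div_mul_left _ _ ht]

end MutualInfo

theorem sum_mul_sub_eq_of_indep {τ ν : Type*} [Fintype τ] (p : Ω → ℝ) (X T : Ω → τ)
    (V : Ω → ν)
    (hind : ∀ t v, probEq p (fun ω => (T ω, V ω)) (t, v) = probEq p T t * probEq p V v)
    (hlaw : ∀ a, probEq p T a = probEq p X a) (g : τ → ν → ℝ) :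
    ∑ ω, p ω * (g (X ω) (V ω) - g (T ω) (V ω)) =
      ∑ a, (∑ ω, (if X ω = a then p ω else 0) * g a (V ω) -
        probEq p X a * ∑ ω, p ω * g a (V ω)) := by
  simp only [← hlaw]
  rw [sum_sub_distrib, ← sum_mul_eq_sum_sum_ite p X fun a ω => g a (V ω),
    ← sum_mul_eq_sum_probEq_mul_of_indep p T V hind g, ← sum_sub_distrib]
  simp only [mul_sub]

theorem sq_sum_le_card_mul_sum {ι κ : Type*} [Fintype ι] [Fintype κ] (c : ι → κ)
    (d w : ι → ℝ) (K : ι → κ → ℝ) (hw : ∀ i, 0 ≤ w i) (hK : ∀ i k, 0 ≤ K i k)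
    (hd : ∀ i, d i ^ 2 ≤ w i * K i (c i)) :
    (∑ i, d i) ^ 2 ≤ Fintype.card κ * ∑ i, w i * ∑ j, K j (c i) := by
  set I : κ → ℝ := fun k => ∑ j, K j k
  have hI : ∀ k, 0 ≤ I k := fun k => sum_nonneg fun j _ => hK j k
  have hKI : ∀ i, K i (c i) ≤ I (c i) := fun i => single_le_sum (fun j _ => hK j (c i)) (mem_univ i)
  have hCS : ∀ i ∈ univ, d i ^ 2 ≤ w i * I (c i) * (K i (c i) / I (c i)) := by
    intro i _
    rcases (hI (c i)).eq_or_lt with h | h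
    · have : K i (c i) = 0 := le_antisymm (h ▸ hKI i) (hK i (c i))
      simpa [this] using hd i
    · rw [mul_assoc, mul_div_cancel₀ _ h.ne']
      exact hd i
  have hfibre : ∑ i, K i (c i) / I (c i) ≤ Fintype.card κ := by
    calc ∑ i, K i (c i) / I (c i) = ∑ k, ∑ i with c i = k, K i (c i) / I (c i) :=
          (sum_fiberwise univ c _).symm
      _ ≤ ∑ _k : κ, (1 : ℝ) := sum_le_sum fun k _ => by
          rw [sum_congr rfl fun i hi => by rw [(mem_filter.1 hi).2], ← sum_div]
          exact div_le_one_of_le₀ (sum_le_sum_of_subset_of_nonneg (filter_subset _ _)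
            fun j _ _ => hK j k) (hI k)
      _ = Fintype.card κ := by simp
  calc (∑ i, d i) ^ 2 ≤ (∑ i, w i * I (c i)) * ∑ i, K i (c i) / I (c i) :=
        sum_sq_le_sum_mul_sum_of_sq_le_mul _ (fun i _ => mul_nonneg (hw i) (hI (c i)))
          (fun i _ => div_nonneg (hK i (c i)) (hI (c i))) hCS
    _ ≤ (∑ i, w i * I (c i)) * Fintype.card κ :=
        mul_le_mul_of_nonneg_left hfibre (sum_nonneg fun i _ => mul_nonneg (hw i) (hI (c i)))
    _ = Fintype.card κ * ∑ i, w i * ∑ j, K j (c i) := mul_comm _ _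

theorem information_ratio_le_half_card_classes_general
    {Ω Arm ZVal : Type*} [Fintype Ω] [Fintype Arm]
    (m : ℕ) (cls : Arm → Fin m)
    (p : Ω → ℝ) (hp : ∀ ω, 0 ≤ p ω) (hpsum : ∑ ω, p ω = 1)
    (Astar At : Ω → Arm) (Z : Ω → Fin m → ZVal)
    (R : Arm × ZVal → ℝ) (hR : ∀ y, R y ∈ Set.Icc (0 : ℝ) 1)
    (hmatch : ∀ a : Arm, probEq p At a = probEq p Astar a)
    (hindep : ∀ (a b : Arm) (z : Fin m → ZVal),
      probEq p (fun ω => (At ω, Astar ω, Z ω)) (a, b, z) =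
        probEq p At a * probEq p (fun ω => (Astar ω, Z ω)) (b, z)) :
    (pmfExp p (fun ω =>
        R (Astar ω, Z ω (cls (Astar ω))) - R (At ω, Z ω (cls (At ω))))) ^ 2 /
        mutualInfo p Astar (fun ω => (At ω, (At ω, Z ω (cls (At ω))))) ≤ m / 2 := by
  have hind : ∀ a v, probEq p (fun ω => (At ω, Astar ω, Z ω)) (a, v) =
      probEq p At a * probEq p (fun ω => (Astar ω, Z ω)) v := fun a v => hindep a v.1 v.2
  have hregret := sum_mul_sub_eq_of_indep p Astar At _ hind hmatch fun a v => R (a, v.2 (cls a))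
  have hgain : mutualInfo p Astar (fun ω => (At ω, (At ω, Z ω (cls (At ω))))) =
      ∑ a, probEq p Astar a * mutualInfo p Astar (fun ω => Z ω (cls a)) := by
    refine (mutualInfo_prodMk_of_indep p At _ hind Prod.fst fun a v => (a, v.2 (cls a))).trans ?_
    simp only [hmatch, mutualInfo_comp_right_of_injective p Astar _ (Prod.mk_right_injective _)]
  have hbound := sq_sum_le_card_mul_sum cls _ (probEq p Astar)
    (fun a k => mutualInfoAt p Astar (fun ω => Z ω k) a / 2) (probEq_nonneg p hp Astar)
    (fun a k => div_nonneg (mutualInfoAt_nonneg p hp hpsum _ _ a) zero_le_two)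
    fun a => (sq_sub_le_mutualInfoAt p hp hpsum Astar _ a fun w => hR (a, w)).trans_eq (by ring)
  simp only [← sum_div, sum_mutualInfoAt, Fintype.card_fin] at hbound
  refine div_le_of_le_mul₀ (mutualInfo_nonneg p hp hpsum _ _) (by positivity) ?_
  rw [pmfExp, hregret, hgain, mul_sum]
  exact hbound.trans_eq (by rw [mul_sum]; exact sum_congr rfl fun a _ => by ring)

/-- Russo–Van Roy information ratio bound with equivalence-class feedback: if playing arm
`a` reveals `Y_a = (a, Z_{[a]})` where `[a]` is the class of `a` under an equivalence
relation with `m` classes, `A_t` is identically distributed with `A*` and independent of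
`(A*, Z)`, and rewards lie in `[0,1]`, then `Γ_t ≤ m/2`. -/
theorem information_ratio_le_half_card_classes
    {Ω Arm ZVal : Type*} [Fintype Ω] [Fintype Arm]
    (m : ℕ) (cls : Arm → Fin m) (hcls : Function.Surjective cls)
    (p : Ω → ℝ) (hp : ∀ ω, 0 ≤ p ω) (hpsum : ∑ ω, p ω = 1)
    (Astar At : Ω → Arm) (Z : Ω → Fin m → ZVal)
    (R : Arm × ZVal → ℝ) (hR : ∀ y, R y ∈ Set.Icc (0 : ℝ) 1)
    (hmatch : ∀ a : Arm, probEq p At a = probEq p Astar a)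
    (hindep : ∀ (a b : Arm) (z : Fin m → ZVal),
      probEq p (fun ω => (At ω, Astar ω, Z ω)) (a, b, z) =
        probEq p At a * probEq p (fun ω => (Astar ω, Z ω)) (b, z)) :
    (pmfExp p (fun ω =>
        R (Astar ω, Z ω (cls (Astar ω))) - R (At ω, Z ω (cls (At ω))))) ^ 2 /
        mutualInfo p Astar (fun ω => (At ω, (At ω, Z ω (cls (At ω))))) ≤ m / 2 :=
  information_ratio_le_half_card_classes_general m cls p hp hpsum Astar At Z R hR hmatch hindep
end
end

section
/- Under Thompson sampling (the probability matching property P_t(A_t = a) = P_t(A* = a)), the conditional mutual information between A* and the full observation decomposes and lower-bounds: I_t(A*; (A_t, Y_{t,A_t})) ≥ Σ_{a} P_t(A_t = a) I_t(A*; Y_{t,a}). -/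
open scoped Classical

noncomputable section

variable {Ω : Type*} [Fintype Ω]

/-! If `A_t` is independent of `(A*, Y)`, then conditioning on `A_t = a` leaves the joint law
of `(A*, Y_a)` unchanged, so the joint law of `(A*, A_t, Y_{A_t})` factors as
`P(A_t = a) · P(A* = b, Y_a = z)` and that of `(A_t, Y_{A_t})` as `P(A_t = a) · P(Y_a = z)`.
The factor `P(A_t = a)` cancels inside the logarithm, and averaging over `A_t` (again by
independence) turns `I(A*; (A_t, Y_{A_t}))` into `∑ a, P(A_t = a) · I(A*; Y_a)`; the
inequality holds with equality. -/

open Finset Real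

section Pushforward

variable {Ω β γ : Type*} [Fintype Ω]

/-- The instance argument lets the indicator use the caller's decidability instance rather than
the classical one inside `probEq`, so that the lemma also rewrites indicators built elsewhere. -/
theorem probEq_eq_pmfExp_ite [DecidableEq β] (p : Ω → ℝ) (X : Ω → β) (c : β) :
    probEq p X c = pmfExp p (fun ω => if X ω = c then 1 else 0) := by
  simp only [probEq, pmfExp, mul_ite, mul_one, mul_zero]
  exact sum_congr rfl fun ω _ => ite_congr rfl (fun _ => rfl) fun _ => rfl

theorem probEq_congr {p : Ω → ℝ} {X : Ω → β} {X' : Ω → γ} {c : β} {c' : γ}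
    (h : ∀ ω, X ω = c ↔ X' ω = c') : probEq p X c = probEq p X' c' := by
  simp only [probEq, h]

theorem pmfExp_comp_eq_sum_probEq (p : Ω → ℝ) (φ : Ω → β) (g : β → ℝ) {s : Finset β}
    (hs : ∀ ω, φ ω ∈ s) :
    pmfExp p (fun ω => g (φ ω)) = ∑ v ∈ s, probEq p φ v * g v := by
  rw [pmfExp, ← sum_fiberwise_of_maps_to fun ω _ => hs ω]
  refine sum_congr rfl fun v _ => ?_
  rw [probEq, ← sum_filter, sum_mul]
  exact sum_congr rfl fun ω hω => by rw [(mem_filter.1 hω).2]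

end Pushforward

section Independence

variable {Ω Arm β γ : Type*} [Fintype Ω] [Fintype Arm]

theorem pmfExp_comp_of_indep (p : Ω → ℝ) (At : Ω → Arm) (ψ : Ω → β)
    (hindep : ∀ a v, probEq p (fun ω => (At ω, ψ ω)) (a, v) = probEq p At a * probEq p ψ v)
    (F : Arm → β → ℝ) :
    pmfExp p (fun ω => F (At ω) (ψ ω)) = ∑ a, probEq p At a * pmfExp p (fun ω => F a (ψ ω)) := by
  have hψ : ∀ ω, ψ ω ∈ univ.image ψ := fun ω => mem_image_of_mem ψ (mem_univ ω)
  calc pmfExp p (fun ω => F (At ω) (ψ ω))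
      = ∑ x ∈ univ ×ˢ univ.image ψ, probEq p (fun ω => (At ω, ψ ω)) x * F x.1 x.2 :=
        pmfExp_comp_eq_sum_probEq p (fun ω => (At ω, ψ ω)) (fun x => F x.1 x.2)
          fun ω => mem_product.2 ⟨mem_univ _, hψ ω⟩
    _ = ∑ a, probEq p At a * ∑ v ∈ univ.image ψ, probEq p ψ v * F a v := by
        simp only [sum_product, hindep, mul_sum, mul_assoc]
    _ = ∑ a, probEq p At a * pmfExp p (fun ω => F a (ψ ω)) := by
        simp only [pmfExp_comp_eq_sum_probEq p ψ (F _) hψ]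

theorem probEq_action_obs_of_indep (p : Ω → ℝ) (At : Ω → Arm) (ψ : Ω → β)
    (hindep : ∀ a v, probEq p (fun ω => (At ω, ψ ω)) (a, v) = probEq p At a * probEq p ψ v)
    (H : Arm → β → γ) (a : Arm) (c : γ) :
    probEq p (fun ω => (At ω, H (At ω) (ψ ω))) (a, c) =
      probEq p At a * probEq p (fun ω => H a (ψ ω)) c := by
  rw [probEq_eq_pmfExp_ite, pmfExp_comp_of_indep p At ψ hindep
    (fun a' v => if (a', H a' v) = (a, c) then 1 else 0), sum_eq_single a]
  · simp only [Prod.mk.injEq, true_and, probEq_eq_pmfExp_ite]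
  · intro a' _ ha'
    simp [ha', pmfExp]
  · simp

theorem mutualInfo_action_obs_of_indep {α 𝒪 : Type*} (p : Ω → ℝ) (X : Ω → α) (At : Ω → Arm)
    (Y : Ω → Arm → 𝒪)
    (hindep : ∀ a (v : α × (Arm → 𝒪)), probEq p (fun ω => (At ω, X ω, Y ω)) (a, v) =
      probEq p At a * probEq p (fun ω => (X ω, Y ω)) v) :
    mutualInfo p X (fun ω => (At ω, Y ω (At ω))) =
      ∑ a, probEq p At a * mutualInfo p X (fun ω => Y ω a) := by
  have hjoint : ∀ b a z, probEq p (fun ω => (X ω, At ω, Y ω (At ω))) (b, a, z) =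
      probEq p At a * probEq p (fun ω => (X ω, Y ω a)) (b, z) := fun b a z =>
    (probEq_congr fun ω => by simp only [Prod.mk.injEq]; tauto).trans
      (probEq_action_obs_of_indep p At _ hindep (fun a v => (v.1, v.2 a)) a (b, z))
  have hobs : ∀ a z, probEq p (fun ω => (At ω, Y ω (At ω))) (a, z) =
      probEq p At a * probEq p (fun ω => Y ω a) z :=
    probEq_action_obs_of_indep p At _ hindep fun a v => v.2 a
  let F : Arm → α × (Arm → 𝒪) → ℝ := fun a v =>
    log (probEq p At a * probEq p (fun ω => (X ω, Y ω a)) (v.1, v.2 a) /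
      (probEq p X v.1 * (probEq p At a * probEq p (fun ω => Y ω a) (v.2 a))))
  calc mutualInfo p X (fun ω => (At ω, Y ω (At ω)))
      = pmfExp p (fun ω => F (At ω) (X ω, Y ω)) := by
        simp only [mutualInfo, pmfExp, hjoint, hobs, F]
    _ = ∑ a, probEq p At a * pmfExp p (fun ω => F a (X ω, Y ω)) :=
        pmfExp_comp_of_indep p At _ hindep F
    _ = ∑ a, probEq p At a * mutualInfo p X (fun ω => Y ω a) := by
        refine sum_congr rfl fun a _ => ?_
        rcases eq_or_ne (probEq p At a) 0 with h | h
        · simp [h]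
        · simp only [F, mutualInfo, pmfExp, mul_left_comm (probEq p X _), mul_div_mul_left _ _ h]

end Independence

theorem mutualInfo_observation_ge_avg_general
    {Ω Arm 𝒪 : Type*} [Fintype Ω] [Fintype Arm]
    (p : Ω → ℝ)
    (Astar At : Ω → Arm) (Y : Ω → Arm → 𝒪)
    (hindep : ∀ (a b : Arm) (y : Arm → 𝒪),
      probEq p (fun ω => (At ω, Astar ω, Y ω)) (a, b, y) =
        probEq p At a * probEq p (fun ω => (Astar ω, Y ω)) (b, y)) :
    ∑ a : Arm, probEq p At a * mutualInfo p Astar (fun ω => Y ω a) ≤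
      mutualInfo p Astar (fun ω => (At ω, Y ω (At ω))) :=
  (mutualInfo_action_obs_of_indep p Astar At Y fun a v => hindep a v.1 v.2).ge

/-- Under the probability matching property of Thompson sampling (`A_t` identically
distributed with `A*` and independent of `(A*, Y)`), the information gained about `A*`
from the full observation lower-bounds the action-averaged information:
`I(A*; (A_t, Y_{A_t})) ≥ Σ_a P(A_t = a) · I(A*; Y_a)`. -/
theorem mutualInfo_observation_ge_avg
    {Ω Arm 𝒪 : Type*} [Fintype Ω] [Fintype Arm]
    (p : Ω → ℝ) (hp : ∀ ω, 0 ≤ p ω) (hpsum : ∑ ω, p ω = 1)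
    (Astar At : Ω → Arm) (Y : Ω → Arm → 𝒪)
    (hmatch : ∀ a : Arm, probEq p At a = probEq p Astar a)
    (hindep : ∀ (a b : Arm) (y : Arm → 𝒪),
      probEq p (fun ω => (At ω, Astar ω, Y ω)) (a, b, y) =
        probEq p At a * probEq p (fun ω => (Astar ω, Y ω)) (b, y)) :
    ∑ a : Arm, probEq p At a * mutualInfo p Astar (fun ω => Y ω a) ≤
      mutualInfo p Astar (fun ω => (At ω, Y ω (At ω))) :=
  mutualInfo_observation_ge_avg_general p Astar At Y hindep
end
end
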